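/- The mapping f : T(X) → P_ω(Y*) interpreting terms as finite languages is a homomorphism of B × (−)^A-coalgebras: for every term σ, ô(f(σ)) = ō(σ) and f(σ)_a = f(σ_a) for all a ∈ A. -/

import Mathlib

/-- Language concatenation `S·T = { st | s ∈ S, t ∈ T }`. -/
def lcat {Y : Type} (S T : Set (List Y)) : Set (List Y) :=
  Set.image2 (· ++ ·) S T

/-- `i : B → P(Y*)`, sending `1` to `{ε}` and `0` to `∅` (Booleans as `Prop`). -/
def iB {Y : Type} (p : Prop) : Set (List Y) := {w | w = [] ∧ p}

section GrammarAutomaton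

variable {X A : Type} (o : X → Prop) (δ : X → A → Set (List X))

/-- Output `ô({s})` of a single word of nonterminals:
`ô({ε}) = 1`, `ô({xw}) = o(x) ∧ ô({w})`. -/
def oWord : List X → Prop
  | [] => True
  | x :: w => o x ∧ oWord w

/-- Derivative `{s}_a` of a single word of nonterminals:
`{ε}_a = ∅`, `{xw}_a = x_a·{w} ∪ i(o(x))·{w}_a`. -/
def dWord : List X → A → Set (List X)
  | [], _ => ∅
  | x :: w, a => lcat (δ x a) {w} ∪ lcat (iB (o x)) (dWord w a)

/-- Output `ô(S) = ⋁_{s ∈ S} ô({s})` of a language of words of nonterminals. -/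
def oSet (S : Set (List X)) : Prop := ∃ s ∈ S, oWord o s

/-- Derivative `S_a = ⋃_{s ∈ S} {s}_a`. -/
def dSet (S : Set (List X)) (a : A) : Set (List X) :=
  ⋃ s ∈ S, dWord o δ s a

/-- Iterated word derivative: `S_ε = S`, `S_{aw} = (S_a)_w`. -/
def dSetWord (S : Set (List X)) : List A → Set (List X)
  | [] => S
  | a :: w => dSetWord (dSet o δ S a) w

/-- One derivation step of the grammar in Greibach normal form determined by
`(o, δ)`: productions are `x → ε` when `o x` holds, and `x → aw` when `w ∈ δ x a`. -/
inductive GStep : List (X ⊕ A) → List (X ⊕ A) → Prop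
  | eps (l r : List (X ⊕ A)) (x : X) (h : o x) :
      GStep (l ++ Sum.inl x :: r) (l ++ r)
  | prod (l r : List (X ⊕ A)) (x : X) (a : A) (w : List X) (h : w ∈ δ x a) :
      GStep (l ++ Sum.inl x :: r) (l ++ Sum.inr a :: w.map Sum.inl ++ r)

/-- Derivability `⇒*`: the reflexive–transitive closure of single derivation steps. -/
def GDerives : List (X ⊕ A) → List (X ⊕ A) → Prop :=
  Relation.ReflTransGen (GStep o δ)

end GrammarAutomaton

/-- Terms `τ ::= 0̄ | 1̄ | x̄ | ā | τ + τ | τ × τ`. -/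
inductive Trm (X A : Type) : Type
  | zero : Trm X A
  | one : Trm X A
  | var (x : X) : Trm X A
  | ltr (a : A) : Trm X A
  | add (s t : Trm X A) : Trm X A
  | mul (s t : Trm X A) : Trm X A

/-- `j : B → T(X)`, `j(0) = 0̄`, `j(1) = 1̄`. -/
def jT {X A : Type} : Bool → Trm X A
  | false => .zero
  | true => .one

section TermExtension

variable {X A : Type} [DecidableEq A] (o : X → Bool) (δ : X → A → Trm X A)

/-- Output `ō` of a term. -/
def oTrm : Trm X A → Bool
  | .zero => false
  | .one => true
  | .var x => o x
  | .ltr _ => false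
  | .add s t => oTrm s || oTrm t
  | .mul s t => oTrm s && oTrm t

/-- Derivative `τ_a` of a term. -/
def dTrm : Trm X A → A → Trm X A
  | .zero, _ => .zero
  | .one, _ => .zero
  | .var x, a => δ x a
  | .ltr b, a => jT (decide (b = a))
  | .add s t, a => .add (dTrm s a) (dTrm t a)
  | .mul s t, a => .add (.mul (dTrm s a) t) (.mul (jT (oTrm o s)) (dTrm t a))

/-- The interpretation `f : T(X) → P_ω(Y*)` of terms as finite languages over
`Y = {x̂ | x ∈ X} ∪ {â | a ∈ A}` (modelled as `X ⊕ A`). -/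
def fTrm : Trm X A → Set (List (X ⊕ A))
  | .zero => ∅
  | .one => {[]}
  | .var x => {[Sum.inl x]}
  | .ltr a => {[Sum.inr a]}
  | .add s t => fTrm s ∪ fTrm t
  | .mul s t => lcat (fTrm s) (fTrm t)

/-- Output function of the grammar coalgebra on `Y = X ⊕ A`. -/
def oY : X ⊕ A → Prop
  | Sum.inl x => o x = true
  | Sum.inr _ => False

/-- Transition function of the grammar coalgebra on `Y = X ⊕ A`:
`x̂_a = f(x_a)`, `b̂_a = i(b = a?)`. -/
def δY : X ⊕ A → A → Set (List (X ⊕ A))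
  | Sum.inl x, a => fTrm (δ x a)
  | Sum.inr b, a => iB (b = a)

end TermExtension


/-!
The output `ô` and the derivatives `(−)_a` of the grammar automaton are compositional
on languages in exactly the way `ō` and `(−)_a` are on terms: both preserve unions, and
on concatenations they obey the Brzozowski product rule
`ô(S·T) = ô(S) ∧ ô(T)`, `(S·T)_a = S_a·T ∪ i(ô(S))·T_a`,
which is the rule defining `(σ × υ)_a`. Since `f` turns `+` into `∪`, `×` into `·` and
`j` into `i`, structural induction on `σ` reduces everything to the generators
`0̄, 1̄, x̄, ā`, where both sides are computed directly.
-/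

section Concatenation

variable {Y : Type}

@[simp]
lemma lcat_empty_left (S : Set (List Y)) : lcat ∅ S = ∅ :=
  Set.image2_empty_left

@[simp]
lemma lcat_nil_right (S : Set (List Y)) : lcat S {[]} = S := by
  simp [lcat]

lemma lcat_singleton (s t : List Y) : lcat {s} {t} = {s ++ t} :=
  Set.image2_singleton

lemma append_mem_lcat {S T : Set (List Y)} {s t : List Y} (hs : s ∈ S) (ht : t ∈ T) :
    s ++ t ∈ lcat S T :=
  Set.mem_image2_of_mem hs ht

lemma lcat_union_left (S T U : Set (List Y)) : lcat (S ∪ T) U = lcat S U ∪ lcat T U :=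
  Set.image2_union_left

lemma lcat_assoc (S T U : Set (List Y)) : lcat (lcat S T) U = lcat S (lcat T U) :=
  Set.image2_assoc List.append_assoc

@[simp]
lemma lcat_iB (p : Prop) (S : Set (List Y)) : lcat (iB p) S = {w | p ∧ w ∈ S} := by
  ext w
  simp [lcat, iB, and_comm]

end Concatenation

section GrammarAutomaton

variable {X A : Type} (o : X → Prop) (δ : X → A → Set (List X))

lemma oWord_append (s t : List X) : oWord o (s ++ t) ↔ oWord o s ∧ oWord o t := by
  induction s with
  | nil => simp [oWord]
  | cons x s ih => simp [oWord, ih, and_assoc]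

lemma oWord_singleton (x : X) : oWord o [x] ↔ o x := by
  simp [oWord]

lemma dWord_singleton (x : X) (a : A) : dWord o δ [x] a = δ x a := by
  simp [dWord]

lemma dWord_append (s t : List X) (a : A) :
    dWord o δ (s ++ t) a =
      lcat (dWord o δ s a) {t} ∪ lcat (iB (oWord o s)) (dWord o δ t a) := by
  induction s with
  | nil => simp [dWord, oWord]
  | cons x s ih =>
    simp only [List.cons_append, dWord, oWord]
    rw [ih, lcat_union_left, lcat_assoc, lcat_assoc, lcat_singleton]
    ext w
    simp only [Set.mem_union, lcat_iB, Set.mem_ofPred_eq]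
    tauto

lemma oSet_union (S T : Set (List X)) : oSet o (S ∪ T) ↔ oSet o S ∨ oSet o T := by
  simp only [oSet, Set.mem_union, or_and_right, exists_or]

lemma oSet_lcat (S T : Set (List X)) : oSet o (lcat S T) ↔ oSet o S ∧ oSet o T := by
  constructor
  · rintro ⟨_, ⟨s, hs, t, ht, rfl⟩, hst⟩
    rw [oWord_append] at hst
    exact ⟨⟨s, hs, hst.1⟩, ⟨t, ht, hst.2⟩⟩
  · rintro ⟨⟨s, hs, hos⟩, ⟨t, ht, hot⟩⟩
    exact ⟨s ++ t, append_mem_lcat hs ht, (oWord_append o s t).2 ⟨hos, hot⟩⟩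

lemma mem_dSet {S : Set (List X)} {w : List X} {a : A} :
    w ∈ dSet o δ S a ↔ ∃ s ∈ S, w ∈ dWord o δ s a := by
  simp [dSet]

lemma dSet_empty (a : A) : dSet o δ ∅ a = ∅ :=
  Set.biUnion_empty _

lemma dSet_singleton (s : List X) (a : A) : dSet o δ {s} a = dWord o δ s a :=
  Set.biUnion_singleton _ _

lemma dSet_union (S T : Set (List X)) (a : A) :
    dSet o δ (S ∪ T) a = dSet o δ S a ∪ dSet o δ T a :=
  Set.biUnion_union _ _ _

lemma dSet_lcat (S T : Set (List X)) (a : A) :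
    dSet o δ (lcat S T) a = lcat (dSet o δ S a) T ∪ lcat (iB (oSet o S)) (dSet o δ T a) := by
  ext w
  simp only [mem_dSet, Set.mem_union, lcat_iB, Set.mem_ofPred_eq]
  constructor
  · rintro ⟨_, ⟨s, hs, t, ht, rfl⟩, hw⟩
    rw [dWord_append, Set.mem_union, lcat_iB] at hw
    rcases hw with ⟨v, hv, _, rfl, rfl⟩ | ⟨hos, hw⟩
    · exact Or.inl (append_mem_lcat ((mem_dSet o δ).2 ⟨s, hs, hv⟩) ht)
    · exact Or.inr ⟨⟨s, hs, hos⟩, t, ht, hw⟩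
  · rintro (⟨u, hu, t, ht, rfl⟩ | ⟨⟨s, hs, hos⟩, t, ht, hw⟩)
    · obtain ⟨s, hs, hu⟩ := (mem_dSet o δ).1 hu
      refine ⟨s ++ t, append_mem_lcat hs ht, ?_⟩
      rw [dWord_append]
      exact Or.inl (append_mem_lcat hu rfl)
    · refine ⟨s ++ t, append_mem_lcat hs ht, ?_⟩
      rw [dWord_append, lcat_iB]
      exact Or.inr ⟨hos, hw⟩

end GrammarAutomaton

section TermInterpretation

variable {X A : Type} (o : X → Bool)

lemma fTrm_jT (b : Bool) : (fTrm (jT b) : Set (List (X ⊕ A))) = iB (b = true) := by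
  cases b <;> simp [jT, fTrm, iB]

lemma oSet_fTrm (σ : Trm X A) : oSet (oY o) (fTrm σ) ↔ oTrm o σ = true := by
  induction σ with
  | zero => simp [oSet, fTrm, oTrm]
  | one => simp [oSet, fTrm, oTrm, oWord]
  | var x => simp [oSet, fTrm, oTrm, oWord_singleton, oY]
  | ltr b => simp [oSet, fTrm, oTrm, oWord_singleton, oY]
  | add s t ihs iht => simp [fTrm, oTrm, oSet_union, ihs, iht]
  | mul s t ihs iht => simp [fTrm, oTrm, oSet_lcat, ihs, iht]

lemma dSet_fTrm [DecidableEq A] (δ : X → A → Trm X A) (σ : Trm X A) (a : A) :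
    dSet (oY o) (δY δ) (fTrm σ) a = fTrm (dTrm o δ σ a) := by
  induction σ with
  | zero => simp [fTrm, dTrm, dSet_empty]
  | one => simp [fTrm, dTrm, dSet_singleton, dWord]
  | var x => simp [fTrm, dTrm, dSet_singleton, dWord_singleton, δY]
  | ltr b => simp [fTrm, dTrm, dSet_singleton, dWord_singleton, δY, fTrm_jT]
  | add s t ihs iht => simp [fTrm, dTrm, dSet_union, ihs, iht]
  | mul s t ihs iht => simp [fTrm, dTrm, dSet_lcat, ihs, iht, fTrm_jT, oSet_fTrm]

end TermInterpretation

/-- The map `f : T(X) → P_ω(Y*)` is a homomorphism of `B × (−)^A`-coalgebras: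
`ô(f(σ)) = ō(σ)` and `f(σ)_a = f(σ_a)`. -/
theorem fTrm_hom {X A : Type} [DecidableEq A]
    (o : X → Bool) (δ : X → A → Trm X A) (σ : Trm X A) (a : A) :
    (oSet (oY o) (fTrm σ) ↔ oTrm o σ = true) ∧
      dSet (oY o) (δY δ) (fTrm σ) a = fTrm (dTrm o δ σ a) :=
  ⟨oSet_fTrm o σ, dSet_fTrm o δ σ a⟩
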